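/- arXiv:1103.5823 — 3 statements merged into one kernel-verified Lean document; each statement's English description precedes it below -/
import Mathlib

section
/- For a ∈ (0,1), b ≠ 0, ∫_{−1}^{1} x·β(x; a, b) dx = (1/b)·log[(e^b a + (1−a))(e^{−b} a + (1−a))/(1−a)²] + (1/b²)·[L₂(−a e^b/(1−a)) − L₂(−a e^{−b}/(1−a))], where L₂(z) = −∫₀^z (1/t)·log(1−t) dt is the Euler dilogarithm. -/
/-!
Put `c = -a / (1 - a) ≤ 0`, so that `β(x) = -c e^{bx} / (1 - c e^{bx})`. Since
`L₂'(z) = -log(1 - z) / z`, the function `x/b · log(1 - c e^{bx}) + L₂(c e^{bx}) / b²` is an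
antiderivative of `x β(x)`: the derivative of the dilogarithm term cancels the one coming from
differentiating the factor `x/b`. The theorem is the fundamental theorem of calculus on `[-1, 1]`.
-/

open Real

noncomputable def eulerDilog (z : ℝ) : ℝ := -∫ t in (0 : ℝ)..z, Real.log (1 - t) / t

open MeasureTheory intervalIntegral

lemma continuousAt_dslope_log_one_sub {z : ℝ} (hz : z < 1) :
    ContinuousAt (dslope (fun t => log (1 - t)) 0) z := by
  have hlog : DifferentiableAt ℝ (fun t => log (1 - t)) z :=
    ((differentiableAt_id.const_sub 1).log (sub_pos.2 hz).ne')
  rcases eq_or_ne z 0 with rfl | hz0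
  · exact continuousAt_dslope_same.2 hlog
  · exact (continuousAt_dslope_of_ne hz0).2 hlog.continuousAt

/-- `dslope` replaces the junk value `log 1 / 0 = 0` at `t = 0` by the limit `-1`, which makes the
integrand continuous on `(-∞, 1)`. -/
lemma eulerDilog_eq_neg_integral_dslope (z : ℝ) :
    eulerDilog z = -∫ t in 0..z, dslope (fun t => log (1 - t)) 0 t := by
  refine congrArg Neg.neg (integral_congr_ae ?_)
  filter_upwards [(Set.countable_singleton (0 : ℝ)).ae_notMem volume] with t ht _
  rw [dslope_of_ne _ ht, slope_def_field]
  simp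

lemma hasDerivAt_eulerDilog {z : ℝ} (hz : z < 1) :
    HasDerivAt eulerDilog (-dslope (fun t => log (1 - t)) 0 z) z := by
  have hcont : ContinuousOn (dslope (fun t => log (1 - t)) 0) (Set.Iio 1) :=
    fun t ht => (continuousAt_dslope_log_one_sub ht).continuousWithinAt
  have hsub : Set.uIcc 0 z ⊆ Set.Iio 1 := fun t ht =>
    (Set.mem_uIcc.1 ht).elim (fun h => h.2.trans_lt hz) (fun h => h.2.trans_lt one_pos)
  rw [show eulerDilog = _ from funext eulerDilog_eq_neg_integral_dslope]
  exact (integral_hasDerivAt_right ((hcont.mono hsub).intervalIntegrable)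
    (hcont.stronglyMeasurableAtFilter isOpen_Iio z hz) (continuousAt_dslope_log_one_sub hz)).neg

section
variable {b c : ℝ}

lemma hasDerivAt_id_mul_log_one_sub_add_eulerDilog (hb : b ≠ 0) (hc : c ≤ 0) (x : ℝ) :
    HasDerivAt (fun x => x / b * log (1 - c * exp (b * x)) + eulerDilog (c * exp (b * x)) / b ^ 2)
      (x * (-(c * exp (b * x)) / (1 - c * exp (b * x)))) x := by
  have hz : c * exp (b * x) ≤ 0 := mul_nonpos_of_nonpos_of_nonneg hc (exp_pos _).le
  have hz1 : 1 - c * exp (b * x) ≠ 0 := by linarith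
  have hzd : HasDerivAt (fun x => c * exp (b * x)) (b * (c * exp (b * x))) x := by
    refine ((((hasDerivAt_id x).const_mul b).exp).const_mul c).congr_deriv ?_
    simp only [id, mul_one]; ring
  have hslope := sub_smul_dslope (fun t => log (1 - t)) 0 (c * exp (b * x))
  have hF := (((hasDerivAt_id x).div_const b).mul ((hzd.const_sub 1).log hz1)).add
    (((hasDerivAt_eulerDilog (hz.trans_lt one_pos)).comp x hzd).div_const (b ^ 2))
  refine hF.congr_deriv ?_
  simp only [id, smul_eq_mul, sub_zero, log_one] at hslope ⊢
  generalize c * exp (b * x) = z at hslope hz1 ⊢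
  field_simp
  linear_combination (z - 1) * hslope

lemma integral_id_mul_logistic (hb : b ≠ 0) (hc : c ≤ 0) (u v : ℝ) :
    ∫ x in u..v, x * (-(c * exp (b * x)) / (1 - c * exp (b * x))) =
      (v / b * log (1 - c * exp (b * v)) + eulerDilog (c * exp (b * v)) / b ^ 2) -
        (u / b * log (1 - c * exp (b * u)) + eulerDilog (c * exp (b * u)) / b ^ 2) := by
  have hpos : ∀ x, 0 < 1 - c * exp (b * x) := fun x => by
    nlinarith [mul_nonpos_of_nonpos_of_nonneg hc (exp_pos (b * x)).le]
  refine integral_eq_sub_of_hasDerivAt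
    (fun x _ => hasDerivAt_id_mul_log_one_sub_add_eulerDilog hb hc x) (Continuous.intervalIntegrable ?_ _ _)
  exact continuous_id.mul (Continuous.div (by fun_prop) (by fun_prop) fun x => (hpos x).ne')

end

/-- The formula for ∫_{−1}^1 x β(x;a,b) dx in terms of the Euler dilogarithm. -/
theorem stmt3 (a b : ℝ) (ha : a ∈ Set.Ioo (0 : ℝ) 1) (hb : b ≠ 0) :
    ∫ x in (-1 : ℝ)..1, x * (Real.exp (b * x) * a / (Real.exp (b * x) * a + (1 - a))) =
      (1 / b) * Real.log ((Real.exp b * a + (1 - a)) * (Real.exp (-b) * a + (1 - a)) / (1 - a) ^ 2)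
        + (1 / b ^ 2) *
          (eulerDilog (-(a * Real.exp b) / (1 - a)) - eulerDilog (-(a * Real.exp (-b)) / (1 - a))) := by
  obtain ⟨ha0, ha1⟩ := ha
  have h1a : 0 < 1 - a := sub_pos.2 ha1
  have hc : -a / (1 - a) ≤ 0 := div_nonpos_of_nonpos_of_nonneg (by linarith) h1a.le
  have harg : ∀ s, -a / (1 - a) * exp s = -(a * exp s) / (1 - a) := fun s => by ring
  have hlog : ∀ s, 1 - -a / (1 - a) * exp s = (exp s * a + (1 - a)) / (1 - a) := fun s => by
    field_simp; ring
  have hβ : ∀ x, exp (b * x) * a / (exp (b * x) * a + (1 - a)) =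
      -(-a / (1 - a) * exp (b * x)) / (1 - -a / (1 - a) * exp (b * x)) := fun x => by
    rw [hlog, harg]
    field_simp
  simp_rw [hβ]
  rw [integral_id_mul_logistic hb hc, mul_one, mul_neg_one, hlog, hlog, harg, harg,
    sq (1 - a), ← div_mul_div_comm, log_mul (by positivity) (by positivity)]
  ring
end

section
/- Fix ρ ∈ (0,1) and for b ≠ 0 let a(b) = (e^{2bρ} − 1)/(e^b + e^{2bρ} − e^{b(2ρ−1)} − 1). Then β(x; a(b), b) = e^{bx}(e^{2bρ}−1) / [e^{bx}(e^{2bρ}−1) + (e^b − e^{b(2ρ−1)})], and as b → +∞, β(x; a(b), b) → 1 if x + 2ρ > 1 and β(x; a(b), b) → 0 if x + 2ρ < 1. -/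
/-!
Clearing the common denominator of `a(b)` turns `β` into `N / (N + M)` with
`N = e^{b(x+2ρ)} - e^{bx}` and `M = e^b - e^{b(2ρ-1)}`, each a difference of two exponentials
dominated by its larger rate. Dividing `N` and `M` by `e^{b · max(x+2ρ, 1)}` sends the one with
the larger rate to `1` and the other to `0`.
-/

open Real Filter Topology

lemma mul_div_mul_add_one_sub_div {K : Type*} [Field K] {E N M : K} (h : N + M ≠ 0) :
    E * (N / (N + M)) / (E * (N / (N + M)) + (1 - N / (N + M))) = E * N / (E * N + M) := by
  rw [one_sub_div h, add_sub_cancel_left, ← mul_div_assoc, ← add_div,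
    div_div_div_cancel_right₀ h]

lemma exp_two_mul_sub_one_add_exp_sub_exp_ne_zero (ρ : ℝ) {b : ℝ} (hb : b ≠ 0) :
    exp (2 * b * ρ) - 1 + (exp b - exp (b * (2 * ρ - 1))) ≠ 0 := by
  have hfactor : exp (2 * b * ρ) - 1 + (exp b - exp (b * (2 * ρ - 1)))
      = (exp b - 1) * (1 + exp (b * (2 * ρ - 1))) := by
    have : exp b * exp (b * (2 * ρ - 1)) = exp (2 * b * ρ) := by rw [← exp_add]; ring_nf
    linear_combination -this
  rw [hfactor]
  exact mul_ne_zero (sub_ne_zero.2 (exp_eq_one_iff b |>.not.2 hb)) (by positivity)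

lemma tendsto_exp_mul_atTop_of_neg {c : ℝ} (hc : c < 0) :
    Tendsto (fun b => exp (b * c)) atTop (𝓝 0) :=
  tendsto_exp_atBot.comp (tendsto_id.atTop_mul_const_of_neg hc)

lemma exp_mul_sub_exp_mul_div_exp_mul (b u v w : ℝ) :
    (exp (b * u) - exp (b * v)) / exp (b * w) = exp (b * (u - w)) - exp (b * (v - w)) := by
  rw [sub_div, ← exp_sub, ← exp_sub, mul_sub, mul_sub]

lemma tendsto_exp_mul_sub_exp_mul_div_exp_mul_of_lt {u v w : ℝ} (hu : u < w) (hv : v < w) :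
    Tendsto (fun b => (exp (b * u) - exp (b * v)) / exp (b * w)) atTop (𝓝 0) := by
  simp only [exp_mul_sub_exp_mul_div_exp_mul]
  simpa using (tendsto_exp_mul_atTop_of_neg (sub_neg.2 hu)).sub
    (tendsto_exp_mul_atTop_of_neg (sub_neg.2 hv))

lemma tendsto_exp_mul_sub_exp_mul_div_exp_mul_self {u v : ℝ} (hv : v < u) :
    Tendsto (fun b => (exp (b * u) - exp (b * v)) / exp (b * u)) atTop (𝓝 1) := by
  simp only [exp_mul_sub_exp_mul_div_exp_mul, sub_self, mul_zero, exp_zero]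
  simpa using (tendsto_exp_mul_atTop_of_neg (sub_neg.2 hv)).const_sub 1

lemma Filter.Tendsto.div_add_of_div {α K : Type*} [Field K] [TopologicalSpace K]
    [IsTopologicalDivisionRing K] {l : Filter α} {f g h : α → K} {p q : K}
    (hf : Tendsto (fun t => f t / h t) l (𝓝 p)) (hg : Tendsto (fun t => g t / h t) l (𝓝 q))
    (hpq : p + q ≠ 0) (hh : ∀ t, h t ≠ 0) :
    Tendsto (fun t => f t / (f t + g t)) l (𝓝 (p / (p + q))) := by
  refine (hf.div (hf.add hg) hpq).congr fun t => ?_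
  rw [Pi.div_apply, ← add_div, div_div_div_cancel_right₀ (hh t)]

lemma exp_mul_mul_exp_two_mul_sub_one (b x ρ : ℝ) :
    exp (b * x) * (exp (2 * b * ρ) - 1) = exp (b * (x + 2 * ρ)) - exp (b * x) := by
  rw [mul_sub_one, ← exp_add]; ring_nf

theorem stmt6_general (ρ : ℝ) (hρ : ρ ∈ Set.Ioo (0 : ℝ) 1) (x : ℝ)
    (a : ℝ → ℝ)
    (ha : ∀ b, a b = (Real.exp (2 * b * ρ) - 1) /
      (Real.exp b + Real.exp (2 * b * ρ) - Real.exp (b * (2 * ρ - 1)) - 1)) :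
    (∀ b : ℝ, b ≠ 0 →
      Real.exp (b * x) * a b / (Real.exp (b * x) * a b + (1 - a b)) =
        Real.exp (b * x) * (Real.exp (2 * b * ρ) - 1) /
          (Real.exp (b * x) * (Real.exp (2 * b * ρ) - 1) +
            (Real.exp b - Real.exp (b * (2 * ρ - 1)))))
    ∧ (x + 2 * ρ > 1 →
        Tendsto (fun b => Real.exp (b * x) * a b / (Real.exp (b * x) * a b + (1 - a b)))
          atTop (nhds 1))
    ∧ (x + 2 * ρ < 1 →
        Tendsto (fun b => Real.exp (b * x) * a b / (Real.exp (b * x) * a b + (1 - a b)))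
          atTop (nhds 0)) := by
  obtain ⟨hρ0, hρ1⟩ := hρ
  have formula : ∀ b : ℝ, b ≠ 0 →
      exp (b * x) * a b / (exp (b * x) * a b + (1 - a b)) =
        exp (b * x) * (exp (2 * b * ρ) - 1) /
          (exp (b * x) * (exp (2 * b * ρ) - 1) + (exp b - exp (b * (2 * ρ - 1)))) := by
    intro b hb
    have hab : a b = (exp (2 * b * ρ) - 1) /
        (exp (2 * b * ρ) - 1 + (exp b - exp (b * (2 * ρ - 1)))) := by
      rw [ha]; ring_nf
    rw [hab, mul_div_mul_add_one_sub_div (exp_two_mul_sub_one_add_exp_sub_exp_ne_zero ρ hb)]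
  have closed_form_atTop : ∀ {L : ℝ},
      Tendsto (fun b => (exp (b * (x + 2 * ρ)) - exp (b * x)) /
        (exp (b * (x + 2 * ρ)) - exp (b * x) + (exp (b * 1) - exp (b * (2 * ρ - 1)))))
        atTop (𝓝 L) →
      Tendsto (fun b => exp (b * x) * a b / (exp (b * x) * a b + (1 - a b))) atTop (𝓝 L) := by
    intro L hL
    refine hL.congr' ?_
    filter_upwards [eventually_gt_atTop 0] with b hb
    rw [formula b hb.ne', exp_mul_mul_exp_two_mul_sub_one, mul_one]
  refine ⟨formula, fun hgt => ?_, fun hlt => ?_⟩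
  · simpa only [add_zero, zero_add, div_one, zero_div] using closed_form_atTop <|
      (tendsto_exp_mul_sub_exp_mul_div_exp_mul_self (by linarith)).div_add_of_div
        (tendsto_exp_mul_sub_exp_mul_div_exp_mul_of_lt hgt (by linarith)) (by norm_num)
        fun _ => (exp_pos _).ne'
  · simpa only [add_zero, zero_add, div_one, zero_div] using closed_form_atTop <|
      (tendsto_exp_mul_sub_exp_mul_div_exp_mul_of_lt hlt (by linarith)).div_add_of_div
        (tendsto_exp_mul_sub_exp_mul_div_exp_mul_self (by linarith)) (by norm_num)
        fun _ => (exp_pos _).ne'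

/-- With a(b) chosen so that ∫β = 2ρ, one has the explicit formula for β(x;a(b),b),
and β(x;a(b),b) → 1 if x + 2ρ > 1, → 0 if x + 2ρ < 1, as b → ∞. -/
theorem stmt6 (ρ : ℝ) (hρ : ρ ∈ Set.Ioo (0 : ℝ) 1) (x : ℝ) (hx : x ∈ Set.Ioo (-1 : ℝ) 1)
    (a : ℝ → ℝ)
    (ha : ∀ b, a b = (Real.exp (2 * b * ρ) - 1) /
      (Real.exp b + Real.exp (2 * b * ρ) - Real.exp (b * (2 * ρ - 1)) - 1)) :
    (∀ b : ℝ, b ≠ 0 →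
      Real.exp (b * x) * a b / (Real.exp (b * x) * a b + (1 - a b)) =
        Real.exp (b * x) * (Real.exp (2 * b * ρ) - 1) /
          (Real.exp (b * x) * (Real.exp (2 * b * ρ) - 1) +
            (Real.exp b - Real.exp (b * (2 * ρ - 1)))))
    ∧ (x + 2 * ρ > 1 →
        Tendsto (fun b => Real.exp (b * x) * a b / (Real.exp (b * x) * a b + (1 - a b)))
          atTop (nhds 1))
    ∧ (x + 2 * ρ < 1 →
        Tendsto (fun b => Real.exp (b * x) * a b / (Real.exp (b * x) * a b + (1 - a b)))
          atTop (nhds 0)) :=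
  stmt6_general ρ hρ x a ha
end

section
/- Let 0 < c₅ < 2π, n ∈ ℕ, θ > 0 with θ < (1/π + 1/c₅)^{−1}/4, and let t ∈ ℝ satisfy c₅/n ≤ t < 2θ, s ∈ [−π, π]. Then #{k : 1 ≤ k ≤ n, s + kt ∈ [−θ, θ] mod 2π} ≤ n/2 + 1; consequently #{k : 1 ≤ k ≤ n, s + kt ∉ [−θ, θ] mod 2π} ≥ n/2 − 1. -/
open Real

set_option maxHeartbeats 1000000

/-- Counting estimate on the region E_{2,n}^{(2)}: if c₅/n ≤ t < 2θ with
θ < (1/π + 1/c₅)⁻¹/4, then at most n/2 + 1 of the points s + kt, 1 ≤ k ≤ n,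
lie in [−θ,θ] mod 2π, hence at least n/2 − 1 lie outside. -/
theorem stmt16 (c₅ : ℝ) (hc₅ : 0 < c₅) (hc₅' : c₅ < 2 * π) (n : ℕ) (hn : 1 ≤ n)
    (θ : ℝ) (hθ : 0 < θ) (hθ' : θ < (1 / π + 1 / c₅)⁻¹ / 4)
    (t s : ℝ) (ht1 : c₅ / n ≤ t) (ht2 : t < 2 * θ) (hs : s ∈ Set.Icc (-π) π) :
    (({k : ℕ | 1 ≤ k ∧ k ≤ n ∧ ∃ j : ℤ, |s + k * t - 2 * π * j| ≤ θ}.ncard : ℝ) ≤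
        (n : ℝ) / 2 + 1)
    ∧ (((n : ℝ) / 2 - 1) ≤
        ({k : ℕ | 1 ≤ k ∧ k ≤ n ∧ ¬∃ j : ℤ, |s + k * t - 2 * π * j| ≤ θ}.ncard : ℝ)) := by
  classical
  have hπ : 0 < π := Real.pi_pos
  have hn0 : 0 < (n : ℝ) := by exact_mod_cast hn
  have hn1 : (1 : ℝ) ≤ (n : ℝ) := by exact_mod_cast hn
  have ht0 : 0 < t := lt_of_lt_of_le (div_pos hc₅ hn0) ht1
  have hnt : c₅ ≤ (n : ℝ) * t := by
    rw [div_le_iff₀ hn0] at ht1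
    linarith
  -- θ < π c₅ / (4 (π + c₅))
  have hinv : (1 / π + 1 / c₅)⁻¹ = π * c₅ / (π + c₅) := by
    rw [div_add_div _ _ (ne_of_gt hπ) (ne_of_gt hc₅)]
    rw [one_mul, mul_one, inv_div]
    ring_nf
  have hθ4 : 4 * θ * (π + c₅) < π * c₅ := by
    rw [hinv, div_div] at hθ'
    have h := (lt_div_iff₀ (by positivity : (0:ℝ) < (π + c₅) * 4)).mp hθ'
    linarith
  have hθπ : θ < π / 4 := by nlinarith
  set P : ℕ → Prop := fun k => ∃ j : ℤ, |s + k * t - 2 * π * j| ≤ θ with hP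
  set B : Finset ℕ := (Finset.Icc 1 n).filter P with hB
  -- main counting bound
  have key : (B.card : ℝ) ≤ (n : ℝ) / 2 + 1 := by
    rcases B.eq_empty_or_nonempty with hBe | hBne
    · rw [hBe]
      simp only [Finset.card_empty, Nat.cast_zero]
      positivity
    · -- choose a winding number for each k
      obtain ⟨Jf, hXspec⟩ : ∃ Jf : ℕ → ℤ, ∀ k ∈ B, |s + k * t - 2 * π * (Jf k)| ≤ θ := by
        refine ⟨fun k => if h : P k then h.choose else 0, fun k hk => ?_⟩
        have hPk : P k := (Finset.mem_filter.mp hk).2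
        simp only [dif_pos hPk]
        exact hPk.choose_spec
      have hmemB : ∀ k ∈ B, 1 ≤ k ∧ k ≤ n := by
        intro k hk
        exact Finset.mem_Icc.mp (Finset.mem_filter.mp hk).1
      set Z : ℕ → ℝ := fun k =>
        (s + k * t - 2 * π * (Jf k)) + (Jf k) * (2 * θ + t) with hZ
      -- gap lemma
      have hgap : ∀ k ∈ B, ∀ k' ∈ B, k < k' → Z k + t ≤ Z k' := by
        intro k hk k' hk' hlt
        have h1 := abs_le.mp (hXspec k hk)
        have h2 := abs_le.mp (hXspec k' hk')
        have hkk : (k : ℝ) + 1 ≤ (k' : ℝ) := by exact_mod_cast Nat.succ_le_of_lt hlt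
        have hD0 : (0 : ℤ) ≤ Jf k' - Jf k := by
          by_contra hcon
          push_neg at hcon
          have hle : Jf k' - Jf k ≤ -1 := by omega
          have hler : ((Jf k' : ℝ) - (Jf k : ℝ)) ≤ -1 := by exact_mod_cast hle
          nlinarith [h1.1, h2.2,
            mul_nonneg (by linarith : (0:ℝ) ≤ (k' : ℝ) - k - 1) ht0.le,
            mul_nonneg (by linarith : (0:ℝ) ≤ -((Jf k' : ℝ) - (Jf k : ℝ)) - 1)
              (by positivity : (0:ℝ) ≤ 2 * π)]
        rcases eq_or_lt_of_le hD0 with hD | hD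
        · have hJr : (Jf k' : ℝ) = (Jf k : ℝ) := by
            have : Jf k' = Jf k := by omega
            exact_mod_cast this
          simp only [hZ]
          nlinarith [mul_nonneg (by linarith : (0:ℝ) ≤ (k' : ℝ) - k - 1) ht0.le, hJr]
        · have hD1 : (1 : ℝ) ≤ (Jf k' : ℝ) - (Jf k : ℝ) := by
            have h' : (1 : ℤ) ≤ Jf k' - Jf k := hD
            exact_mod_cast h'
          simp only [hZ]
          nlinarith [h1.2, h2.1,
            mul_nonneg (by linarith : (0:ℝ) ≤ (Jf k' : ℝ) - (Jf k : ℝ) - 1)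
              (by linarith : (0:ℝ) ≤ 2 * θ + t)]
      obtain ⟨k₀, hk₀B, hk₀min⟩ : ∃ k₀ ∈ B, ∀ k ∈ B, k₀ ≤ k :=
        ⟨B.min' hBne, B.min'_mem hBne, fun k hk => B.min'_le k hk⟩
      obtain ⟨km, hkmB, hkmmax⟩ : ∃ km ∈ B, ∀ k ∈ B, k ≤ km :=
        ⟨B.max' hBne, B.max'_mem hBne, fun k hk => B.le_max' k hk⟩
      -- monotonicity consequences
      have hZlo : ∀ k ∈ B, Z k₀ ≤ Z k := by
        intro k hk
        rcases eq_or_lt_of_le (hk₀min k hk) with h | h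
        · exact le_of_eq (congrArg Z h)
        · linarith [hgap k₀ hk₀B k hk h]
      have hZhi : ∀ k ∈ B, Z k ≤ Z km := by
        intro k hk
        rcases eq_or_lt_of_le (hkmmax k hk) with h | h
        · exact le_of_eq (congrArg Z h)
        · linarith [hgap k hk km hkmB h]
      -- span bound : 2π (Z km - Z k₀) ≤ (n-1) t (2θ + t) + 4 π θ
      have h2θt : 2 * θ + t ≤ 2 * π := by nlinarith
      have hZdiff : 2 * π * (Z km - Z k₀) =
          ((s + km * t - 2 * π * (Jf km)) - (s + k₀ * t - 2 * π * (Jf k₀)))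
              * (2 * π - (2 * θ + t))
            + (((km : ℝ) - k₀) * t) * (2 * θ + t) := by
        simp only [hZ]
        ring
      have hspan2 : 2 * π * (Z km - Z k₀) ≤ ((n : ℝ) - 1) * t * (2 * θ + t) + 4 * π * θ := by
        have h1 := abs_le.mp (hXspec k₀ hk₀B)
        have h2 := abs_le.mp (hXspec km hkmB)
        have hkmn : (km : ℝ) ≤ n := by exact_mod_cast (hmemB km hkmB).2
        have hk01 : (1 : ℝ) ≤ (k₀ : ℝ) := by exact_mod_cast (hmemB k₀ hk₀B).1
        have f1 : ((s + km * t - 2 * π * (Jf km)) - (s + k₀ * t - 2 * π * (Jf k₀)))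
              * (2 * π - (2 * θ + t)) ≤ (2 * θ) * (2 * π - (2 * θ + t)) := by
          apply mul_le_mul_of_nonneg_right _ (by linarith)
          linarith [h1.1, h2.2]
        have f2 : (((km : ℝ) - k₀) * t) * (2 * θ + t) ≤ (((n : ℝ) - 1) * t) * (2 * θ + t) := by
          apply mul_le_mul_of_nonneg_right _ (by linarith)
          apply mul_le_mul_of_nonneg_right _ ht0.le
          linarith
        have f3 : (0:ℝ) ≤ (2 * θ) * (2 * θ + t) :=
          mul_nonneg (by linarith) (by linarith)
        linarith [hZdiff, f1, f2, f3]
      -- the injection into a range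
      set N : ℕ := (⌊(Z km - Z k₀) / t⌋).toNat with hN
      have hfl0 : ∀ k ∈ B, 0 ≤ ⌊(Z k - Z k₀) / t⌋ := by
        intro k hk
        exact Int.floor_nonneg.mpr (div_nonneg (by linarith [hZlo k hk]) ht0.le)
      have hmono : ∀ a ∈ B, ∀ b ∈ B, a < b →
          (⌊(Z a - Z k₀) / t⌋).toNat < (⌊(Z b - Z k₀) / t⌋).toNat := by
        intro a ha b hb hab
        have hz := hgap a ha b hb hab
        have hdiv : (Z a - Z k₀) / t + 1 ≤ (Z b - Z k₀) / t := by
          rw [div_add' _ _ _ (ne_of_gt ht0)]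
          exact (div_le_div_iff_of_pos_right ht0).mpr (by linarith)
        have hfl : ⌊(Z a - Z k₀) / t⌋ + 1 ≤ ⌊(Z b - Z k₀) / t⌋ := by
          have h' := Int.floor_le_floor hdiv
          rwa [Int.floor_add_one] at h'
        have h0 := hfl0 a ha
        omega
      have hmaps : ∀ k ∈ B, (⌊(Z k - Z k₀) / t⌋).toNat ∈ Finset.range (N + 1) := by
        intro k hk
        rw [Finset.mem_range, Nat.lt_succ_iff]
        exact Int.toNat_le_toNat (Int.floor_le_floor
          ((div_le_div_iff_of_pos_right ht0).mpr (by linarith [hZhi k hk])))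
      have hcard : B.card ≤ N + 1 := by
        have h' := Finset.card_le_card_of_injOn
          (fun k => (⌊(Z k - Z k₀) / t⌋).toNat)
          hmaps
          (by
            intro a ha b hb hab
            by_contra hne
            rcases Nat.lt_or_ge a b with h | h
            · exact absurd hab (Nat.ne_of_lt (hmono a ha b hb h))
            · rcases Nat.lt_or_ge b a with h' | h'
              · exact absurd hab.symm (Nat.ne_of_lt (hmono b hb a ha h'))
              · exact hne (le_antisymm h' h))
        simpa [Finset.card_range] using h'
      -- turn into a real bound
      have hNr : (N : ℝ) = (⌊(Z km - Z k₀) / t⌋ : ℝ) := by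
        exact_mod_cast Int.toNat_of_nonneg (hfl0 km hkmB)
      have hNle : (N : ℝ) ≤ (Z km - Z k₀) / t := by
        rw [hNr]
        exact Int.floor_le _
      -- final arithmetic
      have hspanfin : Z km - Z k₀ ≤ t * n / 2 := by
        have f1 : (((n : ℝ) - 1) * t) * (2 * θ + t) ≤ (((n : ℝ) - 1) * t) * (4 * θ) :=
          mul_le_mul_of_nonneg_left (by linarith)
            (by nlinarith [ht0.le, hn1] : (0:ℝ) ≤ ((n : ℝ) - 1) * t)
        have f2 : (π - 4 * θ) * c₅ ≤ (π - 4 * θ) * ((n : ℝ) * t) :=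
          mul_le_mul_of_nonneg_left hnt (by linarith)
        have hmul : 2 * π * (Z km - Z k₀) ≤ 2 * π * (t * n / 2) := by
          nlinarith [hspan2, f1, f2]
        exact le_of_mul_le_mul_left hmul (by positivity)
      have hBr : (B.card : ℝ) ≤ (N : ℝ) + 1 := by exact_mod_cast hcard
      have hlast : (Z km - Z k₀) / t ≤ (n : ℝ) / 2 := by
        rw [div_le_iff₀ ht0]
        calc Z km - Z k₀ ≤ t * n / 2 := hspanfin
          _ = (n : ℝ) / 2 * t := by ring
      linarith
  constructor
  · have hsetB : {k : ℕ | 1 ≤ k ∧ k ≤ n ∧ P k} = ↑B := by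
      ext k
      simp [hB, Finset.mem_Icc, and_assoc]
    rw [hsetB, Set.ncard_coe_finset]
    exact key
  · set C : Finset ℕ := (Finset.Icc 1 n).filter (fun k => ¬ P k) with hC
    have hsetC : {k : ℕ | 1 ≤ k ∧ k ≤ n ∧ ¬ P k} = ↑C := by
      ext k
      simp [hC, Finset.mem_Icc, and_assoc]
    rw [hsetC, Set.ncard_coe_finset]
    have hsum : B.card + C.card = n := by
      rw [hB, hC, Finset.card_filter_add_card_filter_not, Nat.card_Icc]
      simp
    have hCr : (C.card : ℝ) = (n : ℝ) - B.card := by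
      have h' := congrArg (fun m : ℕ => (m : ℝ)) hsum
      push_cast at h'
      linarith
    rw [hCr]
    linarith
end
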